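/- Let D̄ be the closed unit disk in ℝ². For each unit vector u ∈ ℝ², define the meridian γ_u : ℝ → {0,1} × D̄, periodic with period 4, by γ_u(t) = (0, (1 − t)·u) for t ∈ [0, 2) and γ_u(t) = (1, (t − 3)·u) for t ∈ [2, 4). Then: (1) each γ_u is a half-geodesic of period 4 of the double of D̄ with respect to the pseudometric D; and (2) if u and v are unit vectors with v ≠ u and v ≠ −u, then the images of γ_u and γ_v are distinct. In particular, the doubled disk admits infinitely many half-geodesics with pairwise distinct images. -/

import Mathlib

open Real

noncomputable section

/-- The Euclidean plane. -/
abbrev E2 : Type := EuclideanSpace ℝ (Fin 2)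

/-- The pseudometric of the double of a plane set `P`: two points on the same
face are at their Euclidean distance, while points on opposite faces are at
the infimum over boundary points `z ∈ ∂P` of `‖x - z‖ + ‖z - y‖`. -/
def doubleDist (P : Set E2) (p q : Bool × E2) : ℝ :=
  if p.1 = q.1 then ‖p.2 - q.2‖
  else sInf ((fun z => ‖p.2 - z‖ + ‖z - q.2‖) '' frontier P)

/-- The closed unit disk in the plane. -/
def unitDisk : Set E2 := Metric.closedBall 0 1

/-- The meridian of the doubled unit disk in the direction of the unit vector
`u`, periodic of period `4`: on `[0, 2)` it crosses the top face from `u`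
to `-u` through the center, and on `[2, 4)` it returns across the bottom
face. -/
def diskMeridian (u : E2) (t : ℝ) : Bool × E2 :=
  let t' := t - 4 * (⌊t / 4⌋ : ℝ)
  if t' < 2 then (false, (1 - t') • u) else (true, (t' - 3) • u)

/-!
For a unit vector `z`, Cauchy–Schwarz gives `‖x - z‖ ≥ ⟪z - x, z⟫ = 1 - ⟪x, z⟫`, so every broken
path `x → z → y` through the unit circle has length at least `2 - ‖x + y‖`; for `x = a • u` and
`y = b • u` on a diameter this is attained at `z = ±u`. Thus two points `a • u`, `b • u` of a
meridian are at distance `|a - b|` on the same face and `2 - |a + b|` on opposite faces, and after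
reducing `t` to `[0, 4)` by periodicity both expressions equal `s - t` for `t ≤ s ≤ t + 2`.
The top-face point `(false, u)` lies on `γ_v` only if `u = (1 - t) • v` with `t ∈ [0, 2)`, which
forces `t = 0` and `v = u`.
-/

section InnerProductSpace

variable {F : Type*} [NormedAddCommGroup F] [InnerProductSpace ℝ F]

lemma two_sub_norm_add_le_norm_sub_add_norm_sub (x y : F) {z : F} (hz : ‖z‖ = 1) :
    2 - ‖x + y‖ ≤ ‖x - z‖ + ‖z - y‖ := by
  have hzz : inner ℝ z z = 1 := by rw [real_inner_self_eq_norm_sq, hz, one_pow]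
  have hx : 1 - inner ℝ x z ≤ ‖x - z‖ := by
    simpa [norm_sub_rev x z, hz, inner_sub_left, hzz] using real_inner_le_norm (z - x) z
  have hy : 1 - inner ℝ y z ≤ ‖z - y‖ := by
    simpa [hz, inner_sub_left, hzz] using real_inner_le_norm (z - y) z
  have hxy : inner ℝ (x + y) z ≤ ‖x + y‖ := by
    simpa [hz] using real_inner_le_norm (x + y) z
  rw [inner_add_left] at hxy
  linarith

lemma norm_smul_sub_add_norm_sub_smul {u : F} (hu : ‖u‖ = 1) {a b : ℝ} (ha : a ≤ 1) (hb : b ≤ 1) :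
    ‖a • u - u‖ + ‖u - b • u‖ = 2 - (a + b) := by
  have hau : a • u - u = (a - 1) • u := by rw [sub_smul, one_smul]
  have hub : u - b • u = (1 - b) • u := by rw [sub_smul, one_smul]
  rw [hau, hub, norm_smul, norm_smul, hu, Real.norm_of_nonpos (by linarith),
    Real.norm_of_nonneg (by linarith)]
  ring

lemma sInf_norm_smul_sub_add_norm_sub_smul_sphere {u : F} (hu : ‖u‖ = 1) {a b : ℝ}
    (ha : |a| ≤ 1) (hb : |b| ≤ 1) :
    sInf ((fun z => ‖a • u - z‖ + ‖z - b • u‖) '' Metric.sphere 0 1) = 2 - |a + b| := by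
  obtain ⟨ha', ha⟩ := abs_le.mp ha
  obtain ⟨hb', hb⟩ := abs_le.mp hb
  refine IsLeast.csInf_eq ⟨?_, ?_⟩
  · rcases le_or_gt 0 (a + b) with hab | hab
    · refine ⟨u, by simpa using hu, ?_⟩
      dsimp only
      rw [norm_smul_sub_add_norm_sub_smul hu ha hb, abs_of_nonneg hab]
    · refine ⟨-u, by simpa using hu, ?_⟩
      have hu' : ‖-u‖ = 1 := by rw [norm_neg, hu]
      dsimp only
      rw [← neg_smul_neg a, ← neg_smul_neg b,
        norm_smul_sub_add_norm_sub_smul hu' (by linarith) (by linarith), abs_of_neg hab]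
      ring
  · rintro _ ⟨z, hz, rfl⟩
    have h := two_sub_norm_add_le_norm_sub_add_norm_sub (a • u) (b • u) (mem_sphere_zero_iff_norm.mp hz)
    rwa [← add_smul, norm_smul, hu, mul_one, Real.norm_eq_abs] at h

end InnerProductSpace

lemma doubleDist_of_fst_eq (P : Set E2) {p q : Bool × E2} (h : p.1 = q.1) :
    doubleDist P p q = ‖p.2 - q.2‖ :=
  if_pos h

lemma doubleDist_of_fst_ne (P : Set E2) {p q : Bool × E2} (h : p.1 ≠ q.1) :
    doubleDist P p q = sInf ((fun z => ‖p.2 - z‖ + ‖z - q.2‖) '' frontier P) :=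
  if_neg h

lemma doubleDist_comm (P : Set E2) (p q : Bool × E2) : doubleDist P p q = doubleDist P q p := by
  by_cases h : p.1 = q.1
  · rw [doubleDist_of_fst_eq P h, doubleDist_of_fst_eq P h.symm, norm_sub_rev]
  · rw [doubleDist_of_fst_ne P h, doubleDist_of_fst_ne P (Ne.symm h)]
    simp_rw [norm_sub_rev p.2, norm_sub_rev _ q.2, add_comm]

lemma doubleDist_smul_smul_of_eq (P : Set E2) {u : E2} (hu : ‖u‖ = 1) (i : Bool) (a b : ℝ) :
    doubleDist P (i, a • u) (i, b • u) = |a - b| := by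
  rw [doubleDist_of_fst_eq P (p := (i, a • u)) (q := (i, b • u)) rfl, ← sub_smul, norm_smul, hu, mul_one, Real.norm_eq_abs]

lemma frontier_unitDisk : frontier unitDisk = Metric.sphere 0 1 :=
  frontier_closedBall 0 one_ne_zero

lemma doubleDist_unitDisk_smul_smul_of_ne {u : E2} (hu : ‖u‖ = 1) {i j : Bool} (hij : i ≠ j)
    (a b : ℝ) (ha : |a| ≤ 1) (hb : |b| ≤ 1) :
    doubleDist unitDisk (i, a • u) (j, b • u) = 2 - |a + b| := by
  rw [doubleDist_of_fst_ne _ hij, frontier_unitDisk,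
    sInf_norm_smul_sub_add_norm_sub_smul_sphere hu ha hb]

lemma diskMeridian_periodic (u : E2) : Function.Periodic (diskMeridian u) 4 := by
  intro t
  have h : t + 4 - 4 * (⌊(t + 4) / 4⌋ : ℝ) = t - 4 * ⌊t / 4⌋ := by
    rw [show (t + 4) / 4 = t / 4 + 1 by ring, Int.floor_add_one]
    push_cast
    ring
  simp only [diskMeridian, h]

lemma diskMeridian_of_mem_Ico (u : E2) {t : ℝ} (ht : t ∈ Set.Ico (0 : ℝ) 4) :
    diskMeridian u t = if t < 2 then (false, (1 - t) • u) else (true, (t - 3) • u) := by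
  have h : ⌊t / 4⌋ = 0 := Int.floor_eq_zero_iff.mpr ⟨by linarith [ht.1], by linarith [ht.2]⟩
  simp only [diskMeridian, h, Int.cast_zero, mul_zero, sub_zero]

lemma diskMeridian_of_lt_two (u : E2) {t : ℝ} (h0 : 0 ≤ t) (h2 : t < 2) :
    diskMeridian u t = (false, (1 - t) • u) := by
  rw [diskMeridian_of_mem_Ico u ⟨h0, by linarith⟩, if_pos h2]

lemma diskMeridian_of_two_le (u : E2) {t : ℝ} (h2 : 2 ≤ t) (h4 : t < 4) :
    diskMeridian u t = (true, (t - 3) • u) := by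
  rw [diskMeridian_of_mem_Ico u ⟨by linarith, h4⟩, if_neg (not_lt.mpr h2)]

lemma doubleDist_diskMeridian_of_mem_Ico {u : E2} (hu : ‖u‖ = 1) {s t : ℝ}
    (ht : t ∈ Set.Ico (0 : ℝ) 4) (hts : t ≤ s) (hst : s ≤ t + 2) :
    doubleDist unitDisk (diskMeridian u s) (diskMeridian u t) = s - t := by
  obtain ⟨ht0, ht4⟩ := ht
  rcases lt_or_ge t 2 with ht2 | ht2
  · rw [diskMeridian_of_lt_two u ht0 ht2]
    rcases lt_or_ge s 2 with hs2 | hs2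
    · rw [diskMeridian_of_lt_two u (by linarith) hs2, doubleDist_smul_smul_of_eq _ hu,
        abs_of_nonpos (by linarith)]
      ring
    · rw [diskMeridian_of_two_le u hs2 (by linarith),
        doubleDist_unitDisk_smul_smul_of_ne hu (by decide) (s - 3) (1 - t) (abs_le.mpr ⟨by linarith, by linarith⟩)
          (abs_le.mpr ⟨by linarith, by linarith⟩), abs_of_nonpos (by linarith)]
      ring
  · rw [diskMeridian_of_two_le u ht2 ht4]
    rcases lt_or_ge s 4 with hs4 | hs4
    · rw [diskMeridian_of_two_le u (by linarith) hs4, doubleDist_smul_smul_of_eq _ hu,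
        abs_of_nonneg (by linarith)]
      ring
    · rw [← (diskMeridian_periodic u).sub_eq, diskMeridian_of_lt_two u (by linarith) (by linarith),
        doubleDist_unitDisk_smul_smul_of_ne hu (by decide) (1 - (s - 4)) (t - 3) (abs_le.mpr ⟨by linarith, by linarith⟩)
          (abs_le.mpr ⟨by linarith, by linarith⟩), abs_of_nonneg (by linarith)]
      ring

lemma doubleDist_diskMeridian_of_le_of_le_add_two {u : E2} (hu : ‖u‖ = 1) {s t : ℝ}
    (hts : t ≤ s) (hst : s ≤ t + 2) :
    doubleDist unitDisk (diskMeridian u s) (diskMeridian u t) = s - t := by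
  set n := toIcoDiv four_pos 0 t
  have hn : t - n • 4 ∈ Set.Ico (0 : ℝ) 4 := by
    rw [self_sub_toIcoDiv_zsmul]
    exact toIcoMod_mem_Ico' four_pos t
  rw [← (diskMeridian_periodic u).sub_zsmul_eq n, ← (diskMeridian_periodic u).sub_zsmul_eq (x := t) n,
    doubleDist_diskMeridian_of_mem_Ico hu hn (by linarith) (by linarith)]
  ring

lemma doubleDist_diskMeridian {u : E2} (hu : ‖u‖ = 1) {s t : ℝ} (hst : |s - t| ≤ 2) :
    doubleDist unitDisk (diskMeridian u s) (diskMeridian u t) = |s - t| := by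
  rcases le_total t s with h | h
  · rw [abs_of_nonneg (sub_nonneg.mpr h)] at hst ⊢
    exact doubleDist_diskMeridian_of_le_of_le_add_two hu h (by linarith)
  · rw [abs_of_nonpos (sub_nonpos.mpr h)] at hst ⊢
    rw [doubleDist_comm, doubleDist_diskMeridian_of_le_of_le_add_two hu h (by linarith), neg_sub]

lemma eq_of_mk_false_mem_range_diskMeridian {u v : E2} (hu : ‖u‖ = 1) (hv : ‖v‖ = 1)
    (h : (false, u) ∈ Set.range (diskMeridian v)) : u = v := by
  obtain ⟨t, ht⟩ := h
  obtain ⟨t', ht', htt'⟩ := (diskMeridian_periodic v).exists_mem_Ico₀ four_pos t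
  rw [htt', diskMeridian_of_mem_Ico v ht'] at ht
  split_ifs at ht with h2
  · obtain ⟨-, hvu⟩ := Prod.ext_iff.mp ht
    have h1 : |1 - t'| = 1 := by
      simpa [norm_smul, hu, hv] using congrArg norm hvu
    have ht'0 : t' = 0 := by
      rcases abs_eq (zero_le_one' ℝ) |>.mp h1 with h | h <;> linarith [ht'.1]
    simpa [ht'0] using hvu.symm
  · simp at ht

/-- Each meridian `γ_u` of the doubled closed unit disk is a half-geodesic of
period `4` for the pseudometric `D`, and meridians in non-parallel unit
directions have distinct images; hence the doubled disk admits infinitely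
many half-geodesics with pairwise distinct images. -/
theorem doubled_disk_meridians_are_half_geodesics :
    (∀ u : E2, ‖u‖ = 1 →
      (∀ t : ℝ, doubleDist unitDisk (diskMeridian u (t + 4)) (diskMeridian u t) = 0) ∧
      (∀ s t : ℝ, |s - t| ≤ 2 →
        doubleDist unitDisk (diskMeridian u s) (diskMeridian u t) = |s - t|)) ∧
    (∀ u v : E2, ‖u‖ = 1 → ‖v‖ = 1 → v ≠ u → v ≠ -u →
      Set.range (diskMeridian u) ≠ Set.range (diskMeridian v)) := by
  refine ⟨fun u hu => ⟨fun t => ?_, fun s t => doubleDist_diskMeridian hu⟩, ?_⟩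
  · rw [diskMeridian_periodic u t]
    exact (doubleDist_of_fst_eq _ rfl).trans (by rw [sub_self, norm_zero])
  · intro u v hu hv hvu _ hrange
    have hu_mem : (false, u) ∈ Set.range (diskMeridian u) :=
      ⟨0, by rw [diskMeridian_of_lt_two u le_rfl two_pos, sub_zero, one_smul]⟩
    exact hvu (eq_of_mk_false_mem_range_diskMeridian hu hv (hrange ▸ hu_mem)).symm
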